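/- Let ℓ ≥ 2, let G be an undirected flow network with ℓ + 1 commodities with sources s_1, …, s_{ℓ+1} and sinks t_1, …, t_{ℓ+1}, let c be a positive integer, and suppose G contains a Directed edge gadget of capacity c with tail-vertex u and head-vertex v (so the middle vertex v_e and the internal vertices of its twin flow edge gadgets have no incident edges other than those of the gadget). Let (f^1, …, f^{ℓ+1}) be an integer (ℓ+1)-commodity flow in G such that for every commodity j and every edge e incident to s_j (respectively t_j), e carries exactly c(e) units of flow of commodity j directed away from s_j (respectively towards t_j) and no flow of any other commodity, and such that no edge carries positive flow of the same commodity in both directions. Then: (1) Σ_{i=1}^{ℓ} f^i(v_e, v) ≤ c; (2) f^{ℓ+1}(v_e, v) = Σ_{i=1}^{ℓ} f^i(v_e, v); and (3) f^j(v, v_e) = 0 for every commodity j ∈ {1, …, ℓ+1}. -/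
import Mathlib

lemma sum_eq_two_aux {V : Type} [Fintype V] [DecidableEq V] (g : V → ℕ) (a b : V)
    (hab : a ≠ b) (h0 : ∀ x, x ≠ a → x ≠ b → g x = 0) :
    (∑ x, g x) = g a + g b := by
  rw [← Finset.sum_subset (Finset.subset_univ ({a, b} : Finset V))
      (fun x _ hx => h0 x (fun h => hx (by simp [h])) (fun h => hx (by simp [h])))]
  rw [Finset.sum_insert (by simp [hab]), Finset.sum_singleton]

lemma sum_eq_three_aux {V : Type} [Fintype V] [DecidableEq V] (g : V → ℕ) (a b c : V)
    (hab : a ≠ b) (hac : a ≠ c) (hbc : b ≠ c)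
    (h0 : ∀ x, x ≠ a → x ≠ b → x ≠ c → g x = 0) :
    (∑ x, g x) = g a + g b + g c := by
  rw [← Finset.sum_subset (Finset.subset_univ ({a, b, c} : Finset V))
      (fun x _ hx => h0 x (fun h => hx (by simp [h])) (fun h => hx (by simp [h]))
        (fun h => hx (by simp [h])))]
  rw [Finset.sum_insert (by simp [hab, hac]), Finset.sum_insert (by simp [hbc]),
    Finset.sum_singleton, add_assoc]

lemma add_le_sum_two_aux {α : Type*} [Fintype α] [DecidableEq α] (g : α → ℕ) (a b : α)
    (hab : a ≠ b) : g a + g b ≤ ∑ x, g x := by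
  have h : ({a, b} : Finset α).sum g ≤ Finset.univ.sum g :=
    Finset.sum_le_sum_of_subset (Finset.subset_univ _)
  rwa [Finset.sum_insert (by simp [hab]), Finset.sum_singleton] at h

lemma add_le_sum_three_aux {α : Type*} [Fintype α] [DecidableEq α] (g : α → ℕ) (a b c : α)
    (hab : a ≠ b) (hac : a ≠ c) (hbc : b ≠ c) : g a + g b + g c ≤ ∑ x, g x := by
  have h : ({a, b, c} : Finset α).sum g ≤ Finset.univ.sum g :=
    Finset.sum_le_sum_of_subset (Finset.subset_univ _)
  rwa [Finset.sum_insert (by simp [hab, hac]), Finset.sum_insert (by simp [hbc]),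
    Finset.sum_singleton, ← add_assoc] at h

lemma sum_eq_gadget_aux {V : Type} [Fintype V] [DecidableEq V] {ℓ : ℕ} (g : V → ℕ)
    (w3 : Fin ℓ → V) (hinj : Function.Injective w3) (v : V) (hv : ∀ i, w3 i ≠ v)
    (h0 : ∀ x, (∀ i, x ≠ w3 i) → x ≠ v → g x = 0) :
    (∑ x, g x) = (∑ i, g (w3 i)) + g v := by
  have hvnot : v ∉ Finset.univ.image w3 := by
    simp only [Finset.mem_image, Finset.mem_univ, true_and, not_exists]
    exact fun i h => hv i h
  rw [← Finset.sum_subset (Finset.subset_univ (insert v (Finset.univ.image w3)))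
      (fun x _ hx => h0 x (fun i h => hx (by simp [h])) (fun h => hx (by simp [h])))]
  rw [Finset.sum_insert hvnot, Finset.sum_image (fun i _ j _ h => hinj h), add_comm]



/-- An integer `ℓ`-commodity flow on the undirected flow network with symmetric
capacities `cap`, sources `s` and sinks `t`: flows are directed, capacity is
shared by both directions, and conservation holds at every vertex other than
the corresponding source and sink. -/
def IsMultiFlow {V : Type*} [Fintype V] (ℓ : ℕ) (cap : V → V → ℕ)
    (s t : Fin ℓ → V) (f : Fin ℓ → V → V → ℕ) : Prop :=
  (∀ u v, (∑ i, (f i u v + f i v u)) ≤ cap u v) ∧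
  (∀ i, ∀ q, q ≠ s i → q ≠ t i → (∑ u, f i u q) = (∑ u, f i q u))

/-- Lemma 3.19 (functionality of the Directed edge gadget).  There are `ℓ + 1`
commodities; the gadget consists of a middle vertex `ve`, for each
`i : Fin ℓ` a Directed twin flow edge gadget (with internal vertices
`w i 0, …, w i 3`) for the commodities `i.castSucc` and `Fin.last ℓ` from `u`
to `ve`, and the edge `ve v` of capacity `2c`. -/
theorem directed_edge_gadget (V : Type) [Fintype V] [DecidableEq V]
    (ℓ : ℕ) (hl : 2 ≤ ℓ)
    (cap : V → V → ℕ) (hsym : ∀ u v, cap u v = cap v u)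
    (s t : Fin (ℓ + 1) → V)
    (c : ℕ) (hc : 0 < c)
    (u v ve : V) (w : Fin ℓ → Fin 4 → V)
    -- the internal vertices of the gadget are new vertices
    (hwinj : Function.Injective (fun p : Fin ℓ × Fin 4 => w p.1 p.2))
    (hwnew : ∀ i k, w i k ≠ u ∧ w i k ≠ v ∧ w i k ≠ ve ∧
      ∀ j, w i k ≠ s j ∧ w i k ≠ t j)
    (hvenew : ve ≠ u ∧ ve ≠ v ∧ ∀ j, ve ≠ s j ∧ ve ≠ t j)
    -- the edges of the twin flow edge gadgets, all of capacity 2c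
    (hedges : ∀ i : Fin ℓ,
      cap u (w i 0) = 2 * c ∧ cap (w i 0) (w i 1) = 2 * c ∧
      cap (w i 1) (w i 2) = 2 * c ∧ cap (w i 2) (w i 3) = 2 * c ∧
      cap (w i 3) ve = 2 * c ∧
      cap (t i.castSucc) (w i 0) = 2 * c ∧ cap (s i.castSucc) (w i 1) = 2 * c ∧
      cap (t (Fin.last ℓ)) (w i 2) = 2 * c ∧ cap (s (Fin.last ℓ)) (w i 3) = 2 * c)
    (hvev : cap ve v = 2 * c)
    -- the internal vertices have no other incident edges
    (hiso : ∀ i : Fin ℓ,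
      (∀ x, x ≠ u → x ≠ w i 1 → x ≠ t i.castSucc → cap (w i 0) x = 0) ∧
      (∀ x, x ≠ w i 0 → x ≠ w i 2 → x ≠ s i.castSucc → cap (w i 1) x = 0) ∧
      (∀ x, x ≠ w i 1 → x ≠ w i 3 → x ≠ t (Fin.last ℓ) → cap (w i 2) x = 0) ∧
      (∀ x, x ≠ w i 2 → x ≠ ve → x ≠ s (Fin.last ℓ) → cap (w i 3) x = 0))
    (hisove : ∀ x, (∀ i, x ≠ w i 3) → x ≠ v → cap ve x = 0)
    (f : Fin (ℓ + 1) → V → V → ℕ) (hf : IsMultiFlow (ℓ + 1) cap s t f)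
    -- every edge at a source/sink is saturated by the corresponding commodity
    (hsrc : ∀ j x, f j (s j) x = cap (s j) x ∧ f j x (s j) = 0 ∧
       ∀ j', j' ≠ j → f j' (s j) x = 0 ∧ f j' x (s j) = 0)
    (hsink : ∀ j x, f j x (t j) = cap x (t j) ∧ f j (t j) x = 0 ∧
       ∀ j', j' ≠ j → f j' x (t j) = 0 ∧ f j' (t j) x = 0)
    -- no edge carries flow of the same commodity in both directions
    (hnoback : ∀ j x y, f j x y = 0 ∨ f j y x = 0) :
    (∑ i : Fin ℓ, f i.castSucc ve v) ≤ c ∧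
    f (Fin.last ℓ) ve v = (∑ i : Fin ℓ, f i.castSucc ve v) ∧
    (∀ j, f j v ve = 0) := by
  obtain ⟨hcap, hcons⟩ := hf
  have hzero : ∀ (j : Fin (ℓ+1)) (x y : V), cap x y = 0 → f j x y = 0 ∧ f j y x = 0 := by
    intro j x y h
    have hle := hcap x y
    rw [h, Nat.le_zero] at hle
    have hterm : f j x y + f j y x ≤ ∑ i, (f i x y + f i y x) :=
      Finset.single_le_sum (f := fun i => f i x y + f i y x)
        (fun _ _ => Nat.zero_le _) (Finset.mem_univ j)
    omega
  have hone : ∀ (j : Fin (ℓ+1)) (x y : V), f j x y + f j y x ≤ cap x y := fun j x y =>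
    le_trans (Finset.single_le_sum (f := fun j => f j x y + f j y x)
      (fun _ _ => Nat.zero_le _) (Finset.mem_univ j)) (hcap x y)
  have htwo : ∀ (j j' : Fin (ℓ+1)), j ≠ j' → ∀ (x y : V),
      (f j x y + f j y x) + (f j' x y + f j' y x) ≤ cap x y := fun j j' hjj x y =>
    le_trans (add_le_sum_two_aux (fun j => f j x y + f j y x) j j' hjj) (hcap x y)
  have hthree : ∀ (j j' j'' : Fin (ℓ+1)), j ≠ j' → j ≠ j'' → j' ≠ j'' → ∀ (x y : V),
      (f j x y + f j y x) + (f j' x y + f j' y x) + (f j'' x y + f j'' y x) ≤ cap x y :=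
    fun j j' j'' h1 h2 h3 x y =>
    le_trans (add_le_sum_three_aux (fun j => f j x y + f j y x) j j' j'' h1 h2 h3) (hcap x y)
  have hww : ∀ (i : Fin ℓ) (k k' : Fin 4), k ≠ k' → w i k ≠ w i k' :=
    fun i k k' hkk h => hkk (congrArg Prod.snd (hwinj (a₁ := (i, k)) (a₂ := (i, k')) h))
  have hww3 : Function.Injective (fun i : Fin ℓ => w i 3) :=
    fun i i' h => congrArg Prod.fst (hwinj (a₁ := (i, 3)) (a₂ := (i', 3)) h)
  have consAt : ∀ (j : Fin (ℓ+1)) (q x1 x2 x3 : V), q ≠ s j → q ≠ t j →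
      x1 ≠ x2 → x1 ≠ x3 → x2 ≠ x3 → (∀ x, x ≠ x1 → x ≠ x2 → x ≠ x3 → cap q x = 0) →
      f j x1 q + f j x2 q + f j x3 q = f j q x1 + f j q x2 + f j q x3 := by
    intro j q x1 x2 x3 hs ht h12 h13 h23 hz
    have h := hcons j q hs ht
    rw [sum_eq_three_aux (fun x => f j x q) x1 x2 x3 h12 h13 h23
        (fun x a b cc => (hzero j q x (hz x a b cc)).2),
      sum_eq_three_aux (fun x => f j q x) x1 x2 x3 h12 h13 h23
        (fun x a b cc => (hzero j q x (hz x a b cc)).1)] at h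
    exact h
  have consAt2 : ∀ (j : Fin (ℓ+1)) (q x1 x2 : V), q ≠ s j → q ≠ t j →
      x1 ≠ x2 → (∀ x, x ≠ x1 → x ≠ x2 → cap q x = 0) →
      f j x1 q + f j x2 q = f j q x1 + f j q x2 := by
    intro j q x1 x2 hs ht h12 hz
    have h := hcons j q hs ht
    rw [sum_eq_two_aux (fun x => f j x q) x1 x2 h12
        (fun x a b => (hzero j q x (hz x a b)).2),
      sum_eq_two_aux (fun x => f j q x) x1 x2 h12
        (fun x a b => (hzero j q x (hz x a b)).1)] at h
    exact h
  have gadget : ∀ i : Fin ℓ,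
      (f i.castSucc (w i 3) ve = f i.castSucc u (w i 0) ∧ f i.castSucc ve (w i 3) = 0) ∧
      (f (Fin.last ℓ) (w i 3) ve = f i.castSucc u (w i 0) ∧
        f (Fin.last ℓ) ve (w i 3) = 0) ∧
      (∀ j, j ≠ i.castSucc → j ≠ Fin.last ℓ →
        f j (w i 3) ve = 0 ∧ f j ve (w i 3) = 0) := by
    intro i
    obtain ⟨e1, e2, e3, e4, e5, e6, e7, e8, e9⟩ := hedges i
    obtain ⟨iso0, iso1, iso2, iso3⟩ := hiso i
    have hicL : (i.castSucc : Fin (ℓ+1)) ≠ Fin.last ℓ := (Fin.castSucc_lt_last i).ne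
    have cap01 := hone i.castSucc (w i 0) (w i 1)
    rw [e2] at cap01
    -- P0 : behaviour of commodity i at w i 0
    have P0 : f i.castSucc (w i 0) (w i 1) = 0 ∧
        f i.castSucc u (w i 0) + f i.castSucc (w i 1) (w i 0) = 2 * c := by
      by_cases hut : u = t i.castSucc
      · have h := consAt2 i.castSucc (w i 0) u (w i 1)
          ((hwnew i 0).2.2.2 _).1 ((hwnew i 0).2.2.2 _).2
          (Ne.symm (hwnew i 1).1) (fun x h1 h2 => iso0 x h1 h2 (hut ▸ h1))
        have h1 : f i.castSucc u (w i 0) = 0 := by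
          rw [hut]; exact (hsink i.castSucc (w i 0)).2.1
        have h2 : f i.castSucc (w i 0) u = 2 * c := by
          rw [hut]; exact (hsink i.castSucc (w i 0)).1.trans ((hsym _ _).trans e6)
        omega
      · have h := consAt i.castSucc (w i 0) u (w i 1) (t i.castSucc)
          ((hwnew i 0).2.2.2 _).1 ((hwnew i 0).2.2.2 _).2
          (Ne.symm (hwnew i 1).1) hut ((hwnew i 1).2.2.2 _).2 iso0
        have h1 : f i.castSucc (t i.castSucc) (w i 0) = 0 := (hsink _ _).2.1
        have h2 : f i.castSucc (w i 0) (t i.castSucc) = 2 * c :=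
          (hsink _ _).1.trans ((hsym _ _).trans e6)
        have capu := hone i.castSucc u (w i 0)
        rw [e1] at capu
        rcases hnoback i.castSucc (w i 0) (w i 1) with h3 | h3 <;>
          rcases hnoback i.castSucc u (w i 0) with h4 | h4 <;> omega
    -- conservation at w i 1, generic commodity
    have E1 : ∀ j, f j (w i 0) (w i 1) + f j (w i 2) (w i 1) + f j (s i.castSucc) (w i 1)
        = f j (w i 1) (w i 0) + f j (w i 1) (w i 2) + f j (w i 1) (s i.castSucc) :=
      fun j => consAt j (w i 1) (w i 0) (w i 2) (s i.castSucc)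
        ((hwnew i 1).2.2.2 _).1 ((hwnew i 1).2.2.2 _).2
        (hww i 0 2 (by decide)) ((hwnew i 0).2.2.2 _).1 ((hwnew i 2).2.2.2 _).1 iso1
    have hs1 := hsrc i.castSucc (w i 1)
    have hs1v : f i.castSucc (s i.castSucc) (w i 1) = 2 * c := hs1.1.trans e7
    have hs1b : f i.castSucc (w i 1) (s i.castSucc) = 0 := hs1.2.1
    have P1 : f i.castSucc (w i 2) (w i 1) = 0 ∧
        f i.castSucc (w i 1) (w i 2) = f i.castSucc u (w i 0) := by
      have h := E1 i.castSucc
      rcases hnoback i.castSucc (w i 1) (w i 2) with h3 | h3 <;> omega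
    -- conservation at w i 2 for commodities other than the last
    have E2 : ∀ j, j ≠ Fin.last ℓ →
        f j (w i 1) (w i 2) + f j (w i 3) (w i 2)
        = f j (w i 2) (w i 1) + f j (w i 2) (w i 3) := by
      intro j hj
      have h := consAt j (w i 2) (w i 1) (w i 3) (t (Fin.last ℓ)) ((hwnew i 2).2.2.2 _).1
        ((hwnew i 2).2.2.2 _).2 (hww i 1 3 (by decide)) ((hwnew i 1).2.2.2 _).2
        ((hwnew i 3).2.2.2 _).2 iso2
      have hz := (hsink (Fin.last ℓ) (w i 2)).2.2 j hj
      omega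
    have P2 : f i.castSucc (w i 3) (w i 2) = 0 ∧
        f i.castSucc (w i 2) (w i 3) = f i.castSucc u (w i 0) := by
      have h := E2 i.castSucc hicL
      rcases hnoback i.castSucc (w i 2) (w i 3) with h3 | h3 <;> omega
    -- conservation at w i 3 for commodities other than the last
    have E3 : ∀ j, j ≠ Fin.last ℓ →
        f j (w i 2) (w i 3) + f j ve (w i 3)
        = f j (w i 3) (w i 2) + f j (w i 3) ve := by
      intro j hj
      have h := consAt j (w i 3) (w i 2) ve (s (Fin.last ℓ)) ((hwnew i 3).2.2.2 _).1
        ((hwnew i 3).2.2.2 _).2 (hwnew i 2).2.2.1 ((hwnew i 2).2.2.2 _).1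
        (hvenew.2.2 _).1 iso3
      have hz := (hsrc (Fin.last ℓ) (w i 3)).2.2 j hj
      omega
    have P3 : f i.castSucc ve (w i 3) = 0 ∧
        f i.castSucc (w i 3) ve = f i.castSucc u (w i 0) := by
      have h := E3 i.castSucc hicL
      rcases hnoback i.castSucc (w i 3) ve with h3 | h3 <;> omega
    -- chain for the last commodity
    have capC01 := htwo i.castSucc (Fin.last ℓ) hicL (w i 0) (w i 1)
    rw [e2] at capC01
    have capC23 := htwo i.castSucc (Fin.last ℓ) hicL (w i 2) (w i 3)
    rw [e4] at capC23
    have hs1L := hs1.2.2 (Fin.last ℓ) (Ne.symm hicL)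
    have E1L := E1 (Fin.last ℓ)
    have E2L : f (Fin.last ℓ) (w i 1) (w i 2) + f (Fin.last ℓ) (w i 3) (w i 2)
        = f (Fin.last ℓ) (w i 2) (w i 1) + f (Fin.last ℓ) (w i 2) (w i 3) + 2 * c := by
      have h := consAt (Fin.last ℓ) (w i 2) (w i 1) (w i 3) (t (Fin.last ℓ))
        ((hwnew i 2).2.2.2 _).1 ((hwnew i 2).2.2.2 _).2 (hww i 1 3 (by decide))
        ((hwnew i 1).2.2.2 _).2 ((hwnew i 3).2.2.2 _).2 iso2
      have hv1 : f (Fin.last ℓ) (w i 2) (t (Fin.last ℓ)) = 2 * c :=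
        (hsink (Fin.last ℓ) (w i 2)).1.trans ((hsym _ _).trans e8)
      have hv2 : f (Fin.last ℓ) (t (Fin.last ℓ)) (w i 2) = 0 :=
        (hsink (Fin.last ℓ) (w i 2)).2.1
      omega
    have QL : f (Fin.last ℓ) (w i 2) (w i 1) = 0 ∧
        f (Fin.last ℓ) (w i 1) (w i 2) = f i.castSucc u (w i 0) ∧
        f (Fin.last ℓ) (w i 2) (w i 3) = 0 ∧
        f i.castSucc u (w i 0) + f (Fin.last ℓ) (w i 3) (w i 2) = 2 * c := by
      rcases hnoback (Fin.last ℓ) (w i 1) (w i 2) with h3 | h3 <;> omega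
    have E3L : f (Fin.last ℓ) (w i 2) (w i 3) + f (Fin.last ℓ) ve (w i 3) + 2 * c
        = f (Fin.last ℓ) (w i 3) (w i 2) + f (Fin.last ℓ) (w i 3) ve := by
      have h := consAt (Fin.last ℓ) (w i 3) (w i 2) ve (s (Fin.last ℓ))
        ((hwnew i 3).2.2.2 _).1 ((hwnew i 3).2.2.2 _).2 (hwnew i 2).2.2.1
        ((hwnew i 2).2.2.2 _).1 (hvenew.2.2 _).1 iso3
      have hv1 : f (Fin.last ℓ) (s (Fin.last ℓ)) (w i 3) = 2 * c :=
        (hsrc (Fin.last ℓ) (w i 3)).1.trans e9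
      have hv2 : f (Fin.last ℓ) (w i 3) (s (Fin.last ℓ)) = 0 :=
        (hsrc (Fin.last ℓ) (w i 3)).2.1
      omega
    have P3L : f (Fin.last ℓ) ve (w i 3) = 0 ∧
        f (Fin.last ℓ) (w i 3) ve = f i.castSucc u (w i 0) := by
      rcases hnoback (Fin.last ℓ) (w i 3) ve with h3 | h3 <;> omega
    -- other commodities carry nothing on w i 3 – ve
    have Fother : ∀ j, j ≠ i.castSucc → j ≠ Fin.last ℓ →
        f j (w i 3) ve = 0 ∧ f j ve (w i 3) = 0 := by
      intro j hj1 hj2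
      have cap3 := hthree i.castSucc (Fin.last ℓ) j hicL (Ne.symm hj1) (Ne.symm hj2)
        (w i 2) (w i 3)
      rw [e4] at cap3
      have h := E3 j hj2
      rcases hnoback j (w i 3) ve with h3 | h3 <;> omega
    exact ⟨⟨P3.2, P3.1⟩, ⟨P3L.2, P3L.1⟩, Fother⟩
  -- conservation at ve
  have consve : ∀ j, (∑ i, f j (w i 3) ve) + f j v ve
      = (∑ i, f j ve (w i 3)) + f j ve v := by
    intro j
    have h := hcons j ve (hvenew.2.2 j).1 (hvenew.2.2 j).2
    rw [sum_eq_gadget_aux (fun x => f j x ve) (fun i => w i 3) hww3 v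
        (fun i => (hwnew i 3).2.1)
        (fun x hx hv => (hzero j ve x (hisove x hx hv)).2),
      sum_eq_gadget_aux (fun x => f j ve x) (fun i => w i 3) hww3 v
        (fun i => (hwnew i 3).2.1)
        (fun x hx hv => (hzero j ve x (hisove x hx hv)).1)] at h
    exact h
  have keyc : ∀ i0 : Fin ℓ, f i0.castSucc v ve = 0 ∧
      f i0.castSucc ve v = f i0.castSucc u (w i0 0) := by
    intro i0
    have h := consve i0.castSucc
    have h1 : (∑ i, f i0.castSucc (w i 3) ve) = f i0.castSucc u (w i0 0) :=
      (Finset.sum_eq_single i0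
        (fun b _ hb => ((gadget b).2.2 _
          (fun hh => hb (Fin.castSucc_inj.mp hh).symm)
          (Fin.castSucc_lt_last i0).ne).1)
        (fun hmem => absurd (Finset.mem_univ i0) hmem)).trans (gadget i0).1.1
    have h2 : (∑ i, f i0.castSucc ve (w i 3)) = 0 := by
      apply Finset.sum_eq_zero
      intro b _
      by_cases hb : b = i0
      · subst hb; exact (gadget b).1.2
      · exact ((gadget b).2.2 i0.castSucc
          (fun hh => hb (Fin.castSucc_inj.mp hh).symm)
          (Fin.castSucc_lt_last i0).ne).2
    rw [h1, h2] at h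
    rcases hnoback i0.castSucc v ve with h3 | h3 <;> omega
  have keyL : f (Fin.last ℓ) v ve = 0 ∧
      f (Fin.last ℓ) ve v = ∑ i : Fin ℓ, f i.castSucc u (w i 0) := by
    have h := consve (Fin.last ℓ)
    have h1 : (∑ i, f (Fin.last ℓ) (w i 3) ve) = ∑ i : Fin ℓ, f i.castSucc u (w i 0) :=
      Finset.sum_congr rfl (fun b _ => (gadget b).2.1.1)
    have h2 : (∑ i, f (Fin.last ℓ) ve (w i 3)) = 0 :=
      Finset.sum_eq_zero (fun b _ => (gadget b).2.1.2)
    rw [h1, h2] at h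
    obtain ⟨S, hS⟩ : ∃ S, (∑ i : Fin ℓ, f i.castSucc u (w i 0)) = S := ⟨_, rfl⟩
    rw [hS] at h ⊢
    rcases hnoback (Fin.last ℓ) v ve with h3 | h3 <;> omega
  have hsum_eq : (∑ i : Fin ℓ, f i.castSucc ve v) = ∑ i : Fin ℓ, f i.castSucc u (w i 0) :=
    Finset.sum_congr rfl (fun b _ => (keyc b).2)
  refine ⟨?_, ?_, ?_⟩
  · have hcv := hcap ve v
    rw [hvev, Fin.sum_univ_castSucc] at hcv
    have h1 : (∑ i : Fin ℓ, (f i.castSucc ve v + f i.castSucc v ve))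
        = ∑ i : Fin ℓ, f i.castSucc ve v :=
      Finset.sum_congr rfl (fun b _ => by rw [(keyc b).1, add_zero])
    rw [h1, keyL.1, keyL.2, ← hsum_eq, add_zero] at hcv
    obtain ⟨S, hS⟩ : ∃ S, (∑ i : Fin ℓ, f i.castSucc ve v) = S := ⟨_, rfl⟩
    rw [hS] at hcv ⊢
    omega
  · rw [keyL.2, hsum_eq]
  · intro j
    exact Fin.lastCases keyL.1 (fun i0 => (keyc i0).1) j
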